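/- TWFE representation with nonnegative weights under time-constant group effects (Proposition 9, following Goodman-Bacon 2021): Under the staggered adoption panel setting and the parallel trends assumption, suppose additionally that for every g ∈ {2,…,T} there is τ(g) ∈ ℝ with E[Y_t(1) − Y_t(0) | G = g] = τ(g) for all t ∈ {1,…,T}. Define, for g ∈ {2,…,T}, a_H(g) := ((g−1)/T)·[ (Σ_{t=g}^T (1 − F(t)))/(T − g + 1) + (Σ_{t=1}^{g−1} F(t))/(g−1) ]. Then a_H(g) ≥ 0 for every g, Σ_{t=1}^T E[D̈_t·Y_t] = Σ_{g=2}^T (T − g + 1)·a_H(g)·τ(g)·P(G = g), and Σ_{t=1}^T E[D̈_t²] = Σ_{g=2}^T (T − g + 1)·a_H(g)·P(G = g); consequently the two-way fixed effects estimand β_TWFE := (Σ_t E[D̈_t·Y_t])/(Σ_t E[D̈_t²]) is a nonnegatively weighted average of the group average treatment effects τ(g) over treated units. -/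

import Mathlib

/-!
Everything is a function of the adoption date `G`, which takes finitely many values, so both
TWFE moments reduce to sums over (period, cohort) cells with cohort masses `p g = P(G = g)`.
The two-way demeaned treatment `D̈(t, g)` sums to zero over periods for each cohort and, weighted
by `p`, over cohorts for each period; hence `∑ₜ ∑_g D̈(t, g) (a g + p g * b t) = 0` for all `a`,
`b`. Parallel trends puts the untreated cell integrals `∫_{G = g} Yₜ(0)` in this form, and so is
`p g * (D̈ - D)(t, g)`; both moments therefore collapse to `∑ₜ ∑_g D̈(t, g) D(t, g) p g` times the
cell effect, and for staggered adoption `∑ₜ D̈(t, g) D(t, g) = (T - g + 1) a_H(g)` in closed form.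
-/

open MeasureTheory Finset

section TwoWayDemean

variable {ι α : Type*} (I : Finset ι) (d : ι → α → ℝ) (F : ι → ℝ)

noncomputable def twoWayDemean (t : ι) (g : α) : ℝ :=
  d t g - (#I : ℝ)⁻¹ * ∑ s ∈ I, d s g - F t + (#I : ℝ)⁻¹ * ∑ s ∈ I, F s

theorem sum_twoWayDemean_time (g : α) : ∑ t ∈ I, twoWayDemean I d F t g = 0 := by
  rcases I.eq_empty_or_nonempty with rfl | hI
  · simp
  have hI : (#I : ℝ) ≠ 0 := by exact_mod_cast hI.card_pos.ne'
  simp only [twoWayDemean, sum_add_distrib, sum_sub_distrib, sum_const, nsmul_eq_mul]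
  field_simp
  ring

variable {S : Finset α} {p : α → ℝ}

theorem sum_twoWayDemean_mul_group (hp : ∑ g ∈ S, p g = 1)
    (hF : ∀ t ∈ I, F t = ∑ g ∈ S, d t g * p g) (t : ι) (ht : t ∈ I) :
    ∑ g ∈ S, twoWayDemean I d F t g * p g = 0 := by
  have hmean : ∑ g ∈ S, (∑ s ∈ I, d s g) * p g = ∑ s ∈ I, F s := by
    simp_rw [sum_mul]
    rw [sum_comm]
    exact (sum_congr rfl fun s hs => hF s hs).symm
  simp only [twoWayDemean, add_mul, sub_mul, sum_add_distrib, sum_sub_distrib, ← hF t ht,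
    mul_assoc, ← mul_sum, hmean, hp]
  ring

theorem sum_sum_twoWayDemean_mul_additive (hp : ∑ g ∈ S, p g = 1)
    (hF : ∀ t ∈ I, F t = ∑ g ∈ S, d t g * p g) (a : α → ℝ) (b : ι → ℝ) :
    ∑ t ∈ I, ∑ g ∈ S, twoWayDemean I d F t g * (a g + p g * b t) = 0 := by
  have hgroup : ∑ t ∈ I, ∑ g ∈ S, twoWayDemean I d F t g * a g = 0 := by
    rw [sum_comm]
    exact sum_eq_zero fun g _ => by rw [← sum_mul, sum_twoWayDemean_time, zero_mul]
  have htime : ∑ t ∈ I, ∑ g ∈ S, twoWayDemean I d F t g * (p g * b t) = 0 := by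
    refine sum_eq_zero fun t ht => ?_
    calc _ = b t * ∑ g ∈ S, twoWayDemean I d F t g * p g := by
          rw [mul_sum]; exact sum_congr rfl fun g _ => by ring
      _ = 0 := by rw [sum_twoWayDemean_mul_group I d F hp hF t ht, mul_zero]
  simp only [mul_add, sum_add_distrib, hgroup, htime, add_zero]

theorem sum_sum_twoWayDemean_sq (hp : ∑ g ∈ S, p g = 1)
    (hF : ∀ t ∈ I, F t = ∑ g ∈ S, d t g * p g) :
    ∑ t ∈ I, ∑ g ∈ S, twoWayDemean I d F t g ^ 2 * p g =
      ∑ t ∈ I, ∑ g ∈ S, twoWayDemean I d F t g * d t g * p g := by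
  rw [← sub_eq_zero, ← sum_sub_distrib, ← sum_sum_twoWayDemean_mul_additive I d F hp hF
    (fun g => -(p g * ((#I : ℝ)⁻¹ * ∑ s ∈ I, d s g))) (fun t => (#I : ℝ)⁻¹ * ∑ s ∈ I, F s - F t)]
  refine sum_congr rfl fun t _ => ?_
  rw [← sum_sub_distrib]
  refine sum_congr rfl fun g _ => ?_
  unfold twoWayDemean
  ring

end TwoWayDemean

section Fibers

variable {Ω α : Type*} [MeasurableSpace Ω] {μ : Measure Ω} [MeasurableSpace α]
  [MeasurableSingletonClass α] {G : Ω → α} {S : Finset α}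

theorem integral_eq_sum_setIntegral_fiber {E : Type*} [NormedAddCommGroup E] [NormedSpace ℝ E]
    (hG : Measurable G) (hS : ∀ ω, G ω ∈ S) {f : Ω → E}
    (hf : ∀ g ∈ S, IntegrableOn f {ω | G ω = g} μ) :
    ∫ ω, f ω ∂μ = ∑ g ∈ S, ∫ ω in {ω | G ω = g}, f ω ∂μ := by
  have hcover : (⋃ g ∈ S, {ω | G ω = g}) = Set.univ :=
    Set.eq_univ_of_forall fun ω => Set.mem_biUnion (hS ω) rfl
  have hdisj : (S : Set α).Pairwise (Function.onFun Disjoint fun g => {ω | G ω = g}) :=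
    fun g _ g' _ hne => Set.disjoint_left.2 fun ω h h' => hne (h.symm.trans h')
  rw [← setIntegral_univ, ← hcover]
  exact integral_biUnion_finset S (fun g _ => hG (measurableSet_singleton g)) hdisj hf

theorem setIntegral_fiber_comp_mul (hG : Measurable G) (k : α → ℝ) (f : Ω → ℝ) (g : α) :
    ∫ ω in {ω | G ω = g}, k (G ω) * f ω ∂μ = k g * ∫ ω in {ω | G ω = g}, f ω ∂μ := by
  rw [← integral_const_mul]
  exact setIntegral_congr_fun (hG (measurableSet_singleton g)) fun ω (hω : G ω = g) => by rw [hω]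

theorem integrableOn_fiber_comp_mul (hG : Measurable G) (k : α → ℝ) {f : Ω → ℝ} {g : α}
    (hf : IntegrableOn f {ω | G ω = g} μ) :
    IntegrableOn (fun ω => k (G ω) * f ω) {ω | G ω = g} μ :=
  IntegrableOn.congr_fun (hf.const_mul (k g)) (fun ω (hω : G ω = g) => by rw [hω])
    (hG (measurableSet_singleton g))

theorem integral_comp_mul_eq_sum (hG : Measurable G) (hS : ∀ ω, G ω ∈ S) (k : α → ℝ)
    {f : Ω → ℝ} (hf : ∀ g ∈ S, IntegrableOn f {ω | G ω = g} μ) :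
    ∫ ω, k (G ω) * f ω ∂μ = ∑ g ∈ S, k g * ∫ ω in {ω | G ω = g}, f ω ∂μ := by
  rw [integral_eq_sum_setIntegral_fiber hG hS fun g hg =>
    integrableOn_fiber_comp_mul hG k (hf g hg)]
  exact sum_congr rfl fun g _ => setIntegral_fiber_comp_mul hG k f g

variable [IsFiniteMeasure μ]

theorem integral_comp_eq_sum (hG : Measurable G) (hS : ∀ ω, G ω ∈ S) (k : α → ℝ) :
    ∫ ω, k (G ω) ∂μ = ∑ g ∈ S, k g * μ.real {ω | G ω = g} := by
  simpa [setIntegral_const] using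
    integral_comp_mul_eq_sum (μ := μ) hG hS k (f := fun _ => 1) fun g _ => integrableOn_const

theorem sum_measureReal_fiber [IsProbabilityMeasure μ] (hG : Measurable G) (hS : ∀ ω, G ω ∈ S) :
    ∑ g ∈ S, μ.real {ω | G ω = g} = 1 := by
  simpa using (integral_comp_eq_sum (μ := μ) hG hS fun _ => 1).symm

end Fibers

theorem sub_eq_sub_of_forall_sub_eq {x y : ℕ → ℝ} {T : ℕ}
    (h : ∀ t ∈ Icc 2 T, x t - x (t - 1) = y t - y (t - 1)) :
    ∀ t ∈ Icc 1 T, x t - y t = x 1 - y 1 := by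
  intro t ht
  obtain ⟨h1, hT⟩ := mem_Icc.1 ht
  clear ht
  induction t, h1 using Nat.le_induction with
  | base => rfl
  | succ t _ ih =>
    have hstep := h (t + 1) (mem_Icc.2 ⟨by omega, hT⟩)
    rw [Nat.add_sub_cancel] at hstep
    linarith [ih (by omega)]

section ParallelTrends

variable {Ω ι : Type*} [MeasurableSpace Ω] {μ : Measure Ω}

theorem exists_setIntegral_eq_add_of_parallel_trends {Y : ℕ → Ω → ℝ} {T : ℕ}
    (hY : ∀ t ∈ Icc 1 T, Integrable (Y t) μ) {S : Finset ι} {A : ι → Set Ω} (g₀ : ι)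
    (hA : ∀ g ∈ S, μ.real (A g) ≠ 0)
    (hPT : ∀ t ∈ Icc 2 T, ∀ g ∈ S,
      (∫ ω in A g, (Y t ω - Y (t - 1) ω) ∂μ) / μ.real (A g) =
        (∫ ω in A g₀, (Y t ω - Y (t - 1) ω) ∂μ) / μ.real (A g₀)) :
    ∃ c : ℕ → ℝ, ∀ t ∈ Icc 1 T, ∀ g ∈ S,
      ∫ ω in A g, Y t ω ∂μ = ∫ ω in A g, Y 1 ω ∂μ + μ.real (A g) * c t := by
  set e : ι → ℕ → ℝ := fun g t => (∫ ω in A g, Y t ω ∂μ) / μ.real (A g)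
  have hincr : ∀ g, ∀ t ∈ Icc 2 T, (∫ ω in A g, (Y t ω - Y (t - 1) ω) ∂μ) / μ.real (A g) =
      e g t - e g (t - 1) := fun g t ht => by
    have ht' := mem_Icc.1 ht
    rw [integral_sub (hY t (mem_Icc.2 ⟨by omega, ht'.2⟩)).integrableOn
      (hY (t - 1) (mem_Icc.2 ⟨by omega, by omega⟩)).integrableOn, sub_div]
  refine ⟨fun t => e g₀ t - e g₀ 1, fun t ht g hg => ?_⟩
  have hdiff := sub_eq_sub_of_forall_sub_eq (x := e g) (y := e g₀)
    (fun s hs => by rw [← hincr g s hs, ← hincr g₀ s hs, hPT s hs g hg]) t ht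
  have hdiv : ∀ s, ∫ ω in A g, Y s ω ∂μ = μ.real (A g) * e g s := fun s =>
    (mul_div_cancel₀ _ (hA g hg)).symm
  rw [hdiv t, hdiv 1]
  linear_combination μ.real (A g) * hdiff

end ParallelTrends

section Decomposition

variable {Ω α ι : Type*} [MeasurableSpace Ω] {μ : Measure Ω} [IsProbabilityMeasure μ]
  [MeasurableSpace α] [MeasurableSingletonClass α] {G : Ω → α} {S : Finset α}
  {I : Finset ι} {d : ι → α → ℝ} {F : ι → ℝ}

theorem sum_integral_twoWayDemean_mul_observed (hG : Measurable G) (hS : ∀ ω, G ω ∈ S)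
    (hF : ∀ t ∈ I, F t = ∑ g ∈ S, d t g * μ.real {ω | G ω = g}) {Y₀ Y₁ : ι → Ω → ℝ}
    (hY₀ : ∀ t ∈ I, Integrable (Y₀ t) μ) (hY₁ : ∀ t ∈ I, Integrable (Y₁ t) μ)
    {a : α → ℝ} {c : ι → ℝ}
    (hY₀_additive : ∀ t ∈ I, ∀ g ∈ S,
      ∫ ω in {ω | G ω = g}, Y₀ t ω ∂μ = a g + μ.real {ω | G ω = g} * c t) :
    ∑ t ∈ I, ∫ ω, twoWayDemean I d F t (G ω) * (Y₀ t ω + d t (G ω) * (Y₁ t ω - Y₀ t ω)) ∂μ =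
      ∑ t ∈ I, ∑ g ∈ S,
        twoWayDemean I d F t g * d t g * ∫ ω in {ω | G ω = g}, (Y₁ t ω - Y₀ t ω) ∂μ := by
  have hp := sum_measureReal_fiber (μ := μ) hG hS
  have hΔ : ∀ t ∈ I, Integrable (fun ω => Y₁ t ω - Y₀ t ω) μ := fun t ht =>
    (hY₁ t ht).sub (hY₀ t ht)
  have hfiber : ∀ t ∈ I, ∀ g ∈ S,
      ∫ ω in {ω | G ω = g}, (Y₀ t ω + d t (G ω) * (Y₁ t ω - Y₀ t ω)) ∂μ =
        (a g + μ.real {ω | G ω = g} * c t) +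
          d t g * ∫ ω in {ω | G ω = g}, (Y₁ t ω - Y₀ t ω) ∂μ := fun t ht g hg => by
    rw [integral_add (hY₀ t ht).integrableOn
      (integrableOn_fiber_comp_mul hG (d t) (hΔ t ht).integrableOn),
      setIntegral_fiber_comp_mul hG, hY₀_additive t ht g hg]
  calc _ = ∑ t ∈ I, ∑ g ∈ S, twoWayDemean I d F t g *
        ((a g + μ.real {ω | G ω = g} * c t) +
          d t g * ∫ ω in {ω | G ω = g}, (Y₁ t ω - Y₀ t ω) ∂μ) := by
        refine sum_congr rfl fun t ht => ?_
        rw [integral_comp_mul_eq_sum hG hS _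
          (f := fun ω => Y₀ t ω + d t (G ω) * (Y₁ t ω - Y₀ t ω)) fun g _ =>
            (hY₀ t ht).integrableOn.add
            (integrableOn_fiber_comp_mul hG (d t) (hΔ t ht).integrableOn)]
        exact sum_congr rfl fun g hg => by rw [hfiber t ht g hg]
    _ = ∑ t ∈ I, ∑ g ∈ S, twoWayDemean I d F t g * (a g + μ.real {ω | G ω = g} * c t) +
          ∑ t ∈ I, ∑ g ∈ S, twoWayDemean I d F t g * d t g *
            ∫ ω in {ω | G ω = g}, (Y₁ t ω - Y₀ t ω) ∂μ := by
        rw [← sum_add_distrib]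
        refine sum_congr rfl fun t _ => ?_
        rw [← sum_add_distrib]
        exact sum_congr rfl fun g _ => by ring
    _ = _ := by rw [sum_sum_twoWayDemean_mul_additive I d F hp hF, zero_add]

theorem sum_integral_twoWayDemean_sq (hG : Measurable G) (hS : ∀ ω, G ω ∈ S)
    (hF : ∀ t ∈ I, F t = ∑ g ∈ S, d t g * μ.real {ω | G ω = g}) :
    ∑ t ∈ I, ∫ ω, twoWayDemean I d F t (G ω) ^ 2 ∂μ =
      ∑ t ∈ I, ∑ g ∈ S, twoWayDemean I d F t g * d t g * μ.real {ω | G ω = g} := by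
  rw [sum_congr rfl fun t _ =>
    integral_comp_eq_sum (μ := μ) hG hS fun g => twoWayDemean I d F t g ^ 2]
  exact sum_sum_twoWayDemean_sq I d F (sum_measureReal_fiber hG hS) hF

end Decomposition

def adoptionIndicator (t : ℕ) (g : ℕ∞) : ℝ := if g ≤ t then 1 else 0

noncomputable def twfeWeight (F : ℕ → ℝ) (T g : ℕ) : ℝ :=
  (((g : ℝ) - 1) / (T : ℝ)) *
    ((∑ t ∈ Icc g T, (1 - F t)) / ((T : ℝ) - (g : ℝ) + 1) +
      (∑ t ∈ Icc 1 (g - 1), F t) / ((g : ℝ) - 1))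

theorem twfeWeight_nonneg {F : ℕ → ℝ} (hF₀ : ∀ t, 0 ≤ F t) (hF₁ : ∀ t, F t ≤ 1) {T g : ℕ}
    (hg : 1 ≤ g) (hgT : g ≤ T + 1) : 0 ≤ twfeWeight F T g := by
  have hg' : (0 : ℝ) ≤ g - 1 := by
    rw [sub_nonneg]; exact_mod_cast hg
  have hgT' : (0 : ℝ) ≤ T - g + 1 := by
    rw [sub_add_eq_add_sub, sub_nonneg]; exact_mod_cast hgT
  unfold twfeWeight
  refine mul_nonneg (by positivity) (add_nonneg (div_nonneg ?_ hgT') (div_nonneg ?_ hg'))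
  · exact sum_nonneg fun t _ => sub_nonneg.2 (hF₁ t)
  · exact sum_nonneg fun t _ => hF₀ t

theorem sum_twoWayDemean_mul_adoptionIndicator (F : ℕ → ℝ) {T n : ℕ} (hn : 2 ≤ n)
    (hnT : n ≤ T) :
    ∑ t ∈ Icc 1 T, twoWayDemean (Icc 1 T) adoptionIndicator F t n * adoptionIndicator t n =
      ((T : ℝ) - n + 1) * twfeWeight F T n := by
  have hind : ∀ t : ℕ, adoptionIndicator t n = if n ≤ t then 1 else 0 := fun t => by
    simp only [adoptionIndicator, Nat.cast_le]
  have hfilter : {t ∈ Icc 1 T | n ≤ t} = Icc n T := by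
    ext t; simp only [mem_filter, mem_Icc]; omega
  have hcard : ((#(Icc n T) : ℕ) : ℝ) = T - n + 1 := by
    rw [Nat.card_Icc, Nat.cast_sub (by omega)]; push_cast; ring
  have hsplit : ∑ t ∈ Icc 1 T, F t = ∑ t ∈ Icc n T, F t + ∑ t ∈ Icc 1 (n - 1), F t := by
    rw [← sum_filter_add_sum_filter_not (Icc 1 T) (n ≤ ·), hfilter]
    congr 2
    ext t; simp only [mem_filter, mem_Icc]; omega
  have hcardT : (#(Icc 1 T) : ℝ) = T := by simp
  have hmean : (#(Icc 1 T) : ℝ)⁻¹ * ∑ s ∈ Icc 1 T, adoptionIndicator s n = (T - n + 1) / T := by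
    rw [sum_congr rfl fun s _ => hind s, sum_boole, hfilter, hcard, hcardT, inv_mul_eq_div]
  have hterm : ∀ t, twoWayDemean (Icc 1 T) adoptionIndicator F t n * adoptionIndicator t n =
      if n ≤ t then (1 - (T - n + 1) / T + (T : ℝ)⁻¹ * ∑ s ∈ Icc 1 T, F s) - F t
      else 0 := fun t => by
    rw [twoWayDemean, hmean, hind, hcardT]; split_ifs <;> ring
  have hT : (T : ℝ) ≠ 0 := by exact_mod_cast (by omega : T ≠ 0)
  have hn₁ : (n : ℝ) - 1 ≠ 0 := by
    rw [sub_ne_zero]; exact_mod_cast (by omega : n ≠ 1)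
  have hnT' : (T : ℝ) - n + 1 ≠ 0 := by
    rw [sub_add_eq_add_sub, sub_ne_zero]; exact_mod_cast (by omega : T + 1 ≠ n)
  rw [sum_congr rfl fun t _ => hterm t, ← sum_filter, hfilter, sum_sub_distrib, sum_const,
    nsmul_eq_mul, hcard, hsplit, twfeWeight, sum_sub_distrib, sum_const, nsmul_eq_mul, hcard]
  field_simp
  ring

def adoptionDates (T : ℕ) : Finset ℕ∞ := insert ⊤ ((Icc 2 T).image (↑))

theorem mem_adoptionDates {T : ℕ} {g : ℕ∞} :
    g ∈ adoptionDates T ↔ g = ⊤ ∨ (2 ≤ g ∧ g ≤ (T : ℕ∞)) := by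
  induction g using ENat.recTopCoe with
  | top => simp [adoptionDates]
  | coe n => simp [adoptionDates, and_comm]

theorem natCast_mem_adoptionDates {T n : ℕ} (hn : n ∈ Icc 2 T) :
    (n : ℕ∞) ∈ adoptionDates T :=
  mem_insert_of_mem (mem_image_of_mem _ hn)

theorem forall_mem_adoptionDates {T : ℕ} {q : ℕ∞ → Prop} (htop : q ⊤)
    (hnat : ∀ n : ℕ, 2 ≤ n → n ≤ T → q n) : ∀ g ∈ adoptionDates T, q g := by
  intro g hg
  rcases mem_insert.1 hg with rfl | hg
  · exact htop
  · obtain ⟨n, hn, rfl⟩ := mem_image.1 hg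
    exact hnat n (mem_Icc.1 hn).1 (mem_Icc.1 hn).2

theorem sum_adoptionDates {M : Type*} [AddCommMonoid M] {T : ℕ} {f : ℕ∞ → M} (hf : f ⊤ = 0) :
    ∑ g ∈ adoptionDates T, f g = ∑ n ∈ Icc 2 T, f n := by
  rw [adoptionDates, sum_insert (by simp), hf, zero_add, sum_image Nat.cast_injective.injOn]

theorem sum_sum_twoWayDemean_adoptionIndicator_mul (F : ℕ → ℝ) {T : ℕ} {h : ℕ → ℕ∞ → ℝ}
    {c : ℕ → ℝ} (hc : ∀ t ∈ Icc 1 T, ∀ n ∈ Icc 2 T, h t n = c n) :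
    ∑ t ∈ Icc 1 T, ∑ g ∈ adoptionDates T,
        twoWayDemean (Icc 1 T) adoptionIndicator F t g * adoptionIndicator t g * h t g =
      ∑ n ∈ Icc 2 T, ((T : ℝ) - n + 1) * twfeWeight F T n * c n := by
  rw [sum_comm, sum_adoptionDates (by simp [adoptionIndicator])]
  refine sum_congr rfl fun n hn => ?_
  obtain ⟨h2, hT⟩ := mem_Icc.1 hn
  rw [sum_congr rfl fun t ht => by rw [hc t ht n hn], ← sum_mul,
    sum_twoWayDemean_mul_adoptionIndicator F h2 hT]

theorem integral_adoptionIndicator {Ω : Type*} [MeasurableSpace Ω] {μ : Measure Ω}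
    {G : Ω → ℕ∞} (hG : Measurable G) (t : ℕ) :
    ∫ ω, adoptionIndicator t (G ω) ∂μ = μ.real {ω | G ω ≤ t} := by
  rw [← integral_indicator_one (s := {ω | G ω ≤ t})
    (hG (Set.to_countable (Set.Iic (t : ℕ∞))).measurableSet)]
  simp only [adoptionIndicator, Set.indicator_apply, Set.mem_ofPred_eq, Pi.one_apply]

theorem twfe_nonnegative_weights_time_constant_effects_general
    {Ω : Type*} {mΩ : MeasurableSpace Ω} (P : Measure Ω) [IsProbabilityMeasure P]
    (T : ℕ)
    (G : Ω → ℕ∞) (hG_meas : Measurable G)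
    (hG_range : ∀ ω, G ω = ⊤ ∨ (2 ≤ G ω ∧ G ω ≤ (T : ℕ∞)))
    (hG_top : 0 < P {ω | G ω = ⊤})
    (hG_pos : ∀ g : ℕ, 2 ≤ g → g ≤ T → 0 < P {ω | G ω = (g : ℕ∞)})
    (Y0 Y1 : ℕ → Ω → ℝ)
    (hY0_int : ∀ t ∈ Finset.Icc 1 T, Integrable (Y0 t) P)
    (hY1_int : ∀ t ∈ Finset.Icc 1 T, Integrable (Y1 t) P)
    (D : ℕ → Ω → ℝ) (hD : ∀ t ω, D t ω = if G ω ≤ (t : ℕ∞) then 1 else 0)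
    (Yobs : ℕ → Ω → ℝ) (hYobs : ∀ t ω, Yobs t ω = D t ω * Y1 t ω + (1 - D t ω) * Y0 t ω)
    (F : ℕ → ℝ) (hF : ∀ t, F t = (P {ω | G ω ≤ (t : ℕ∞)}).toReal)
    (Ddd : ℕ → Ω → ℝ)
    (hDdd : ∀ t ω, Ddd t ω = D t ω - (1 / (T : ℝ)) * ∑ s ∈ Finset.Icc 1 T, D s ω
      - F t + (1 / (T : ℝ)) * ∑ s ∈ Finset.Icc 1 T, F s)
    -- parallel trends
    (hPT : ∀ t : ℕ, 2 ≤ t → t ≤ T →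
      ∀ g g' : ℕ∞, (g = ⊤ ∨ (2 ≤ g ∧ g ≤ (T : ℕ∞))) → (g' = ⊤ ∨ (2 ≤ g' ∧ g' ≤ (T : ℕ∞))) →
        (∫ ω in {ω | G ω = g}, (Y0 t ω - Y0 (t - 1) ω) ∂P) / (P {ω | G ω = g}).toReal =
        (∫ ω in {ω | G ω = g'}, (Y0 t ω - Y0 (t - 1) ω) ∂P) / (P {ω | G ω = g'}).toReal)
    -- group-time average treatment effects constant over time
    (τ : ℕ → ℝ)
    (hτ : ∀ g : ℕ, 2 ≤ g → g ≤ T → ∀ t ∈ Finset.Icc 1 T,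
      (∫ ω in {ω | G ω = (g : ℕ∞)}, (Y1 t ω - Y0 t ω) ∂P) /
        (P {ω | G ω = (g : ℕ∞)}).toReal = τ g)
    -- the Goodman-Bacon-type weights
    (aH : ℕ → ℝ)
    (haH : ∀ g : ℕ, 2 ≤ g → g ≤ T → aH g = (((g : ℝ) - 1) / (T : ℝ)) *
      ((∑ t ∈ Finset.Icc g T, (1 - F t)) / ((T : ℝ) - (g : ℝ) + 1)
        + (∑ t ∈ Finset.Icc 1 (g - 1), F t) / ((g : ℝ) - 1))) :
    (∀ g : ℕ, 2 ≤ g → g ≤ T → 0 ≤ aH g) ∧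
    (∑ t ∈ Finset.Icc 1 T, ∫ ω, Ddd t ω * Yobs t ω ∂P) =
      (∑ g ∈ Finset.Icc 2 T,
        ((T : ℝ) - (g : ℝ) + 1) * aH g * τ g * (P {ω | G ω = (g : ℕ∞)}).toReal) ∧
    (∑ t ∈ Finset.Icc 1 T, ∫ ω, (Ddd t ω) ^ 2 ∂P) =
      (∑ g ∈ Finset.Icc 2 T,
        ((T : ℝ) - (g : ℝ) + 1) * aH g * (P {ω | G ω = (g : ℕ∞)}).toReal) ∧
    (∑ t ∈ Finset.Icc 1 T, ∫ ω, Ddd t ω * Yobs t ω ∂P) /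
        (∑ t ∈ Finset.Icc 1 T, ∫ ω, (Ddd t ω) ^ 2 ∂P) =
      (∑ g ∈ Finset.Icc 2 T,
        ((T : ℝ) - (g : ℝ) + 1) * aH g * τ g * (P {ω | G ω = (g : ℕ∞)}).toReal) /
      (∑ g ∈ Finset.Icc 2 T,
        ((T : ℝ) - (g : ℝ) + 1) * aH g * (P {ω | G ω = (g : ℕ∞)}).toReal) := by
  have hGS : ∀ ω, G ω ∈ adoptionDates T := fun ω => mem_adoptionDates.2 (hG_range ω)
  have hp : ∀ g ∈ adoptionDates T, P.real {ω | G ω = g} ≠ 0 :=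
    forall_mem_adoptionDates ((measureReal_ne_zero_iff (measure_ne_top _ _)).2 hG_top.ne')
      fun n h2 hnT => (measureReal_ne_zero_iff (measure_ne_top _ _)).2 (hG_pos n h2 hnT).ne'
  have hF_eq : ∀ t ∈ Icc 1 T,
      F t = ∑ g ∈ adoptionDates T, adoptionIndicator t g * P.real {ω | G ω = g} := fun t _ => by
    rw [hF, ← Measure.real_def, ← integral_adoptionIndicator hG_meas,
      integral_comp_eq_sum hG_meas hGS]
  have hDdd_eq : ∀ t ω, Ddd t ω = twoWayDemean (Icc 1 T) adoptionIndicator F t (G ω) :=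
    fun t ω => by
      simp only [hDdd, hD, twoWayDemean, adoptionIndicator, Nat.card_Icc, Nat.add_sub_cancel,
        one_div]
  have hYobs_eq : ∀ t ω, Yobs t ω = Y0 t ω + adoptionIndicator t (G ω) * (Y1 t ω - Y0 t ω) :=
    fun t ω => by rw [hYobs, hD, adoptionIndicator]; ring
  obtain ⟨c, hc⟩ := exists_setIntegral_eq_add_of_parallel_trends hY0_int ⊤ hp fun t ht g hg =>
    hPT t (mem_Icc.1 ht).1 (mem_Icc.1 ht).2 g ⊤ (mem_adoptionDates.1 hg) (Or.inl rfl)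
  have hATT : ∀ t ∈ Icc 1 T, ∀ n ∈ Icc 2 T,
      ∫ ω in {ω | G ω = n}, (Y1 t ω - Y0 t ω) ∂P = τ n * P.real {ω | G ω = n} :=
    fun t ht n hn => (div_eq_iff (hp n (natCast_mem_adoptionDates hn))).1
      (hτ n (mem_Icc.1 hn).1 (mem_Icc.1 hn).2 t ht)
  have haH' : ∀ n ∈ Icc 2 T, aH n = twfeWeight F T n := fun n hn =>
    haH n (mem_Icc.1 hn).1 (mem_Icc.1 hn).2
  have hnum : ∑ t ∈ Icc 1 T, ∫ ω, Ddd t ω * Yobs t ω ∂P =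
      ∑ g ∈ Icc 2 T, ((T : ℝ) - g + 1) * aH g * τ g * (P {ω | G ω = (g : ℕ∞)}).toReal := by
    simp_rw [hDdd_eq, hYobs_eq]
    rw [sum_integral_twoWayDemean_mul_observed hG_meas hGS hF_eq hY0_int hY1_int hc,
      sum_sum_twoWayDemean_adoptionIndicator_mul F hATT]
    exact sum_congr rfl fun n hn => by rw [haH' n hn, ← Measure.real_def]; ring
  have hden : ∑ t ∈ Icc 1 T, ∫ ω, Ddd t ω ^ 2 ∂P =
      ∑ g ∈ Icc 2 T, ((T : ℝ) - g + 1) * aH g * (P {ω | G ω = (g : ℕ∞)}).toReal := by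
    simp_rw [hDdd_eq]
    rw [sum_integral_twoWayDemean_sq hG_meas hGS hF_eq,
      sum_sum_twoWayDemean_adoptionIndicator_mul F fun _ _ _ _ => rfl]
    exact sum_congr rfl fun n hn => by rw [haH' n hn]; rfl
  refine ⟨fun g h2 hgT => ?_, hnum, hden, by rw [hnum, hden]⟩
  rw [haH g h2 hgT]
  exact twfeWeight_nonneg (fun t => (hF t).symm ▸ ENNReal.toReal_nonneg)
    (fun t => (hF t).symm ▸ measureReal_le_one) (by omega) (by omega)

/-- **Proposition 9** (TWFE representation with nonnegative weights under time-constant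
group effects, following Goodman-Bacon 2021). In the staggered adoption panel under
parallel trends and group effects `τ(g)` constant over time, the TWFE numerator and
denominator decompose with nonnegative weights `a_H(g)`, so the TWFE estimand is a
nonnegatively weighted average of the group ATTs `τ(g)`. -/
theorem twfe_nonnegative_weights_time_constant_effects
    {Ω : Type*} {mΩ : MeasurableSpace Ω} (P : Measure Ω) [IsProbabilityMeasure P]
    (T : ℕ) (hT : 2 ≤ T)
    (G : Ω → ℕ∞) (hG_meas : Measurable G)
    (hG_range : ∀ ω, G ω = ⊤ ∨ (2 ≤ G ω ∧ G ω ≤ (T : ℕ∞)))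
    (hG_top : 0 < P {ω | G ω = ⊤})
    (hG_pos : ∀ g : ℕ, 2 ≤ g → g ≤ T → 0 < P {ω | G ω = (g : ℕ∞)})
    (Y0 Y1 : ℕ → Ω → ℝ)
    (hY0_int : ∀ t ∈ Finset.Icc 1 T, Integrable (Y0 t) P)
    (hY1_int : ∀ t ∈ Finset.Icc 1 T, Integrable (Y1 t) P)
    (hY0_meas : ∀ t ∈ Finset.Icc 1 T, Measurable (Y0 t))
    (hY1_meas : ∀ t ∈ Finset.Icc 1 T, Measurable (Y1 t))
    (D : ℕ → Ω → ℝ) (hD : ∀ t ω, D t ω = if G ω ≤ (t : ℕ∞) then 1 else 0)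
    (Yobs : ℕ → Ω → ℝ) (hYobs : ∀ t ω, Yobs t ω = D t ω * Y1 t ω + (1 - D t ω) * Y0 t ω)
    (F : ℕ → ℝ) (hF : ∀ t, F t = (P {ω | G ω ≤ (t : ℕ∞)}).toReal)
    (Ddd : ℕ → Ω → ℝ)
    (hDdd : ∀ t ω, Ddd t ω = D t ω - (1 / (T : ℝ)) * ∑ s ∈ Finset.Icc 1 T, D s ω
      - F t + (1 / (T : ℝ)) * ∑ s ∈ Finset.Icc 1 T, F s)
    -- parallel trends
    (hPT : ∀ t : ℕ, 2 ≤ t → t ≤ T →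
      ∀ g g' : ℕ∞, (g = ⊤ ∨ (2 ≤ g ∧ g ≤ (T : ℕ∞))) → (g' = ⊤ ∨ (2 ≤ g' ∧ g' ≤ (T : ℕ∞))) →
        (∫ ω in {ω | G ω = g}, (Y0 t ω - Y0 (t - 1) ω) ∂P) / (P {ω | G ω = g}).toReal =
        (∫ ω in {ω | G ω = g'}, (Y0 t ω - Y0 (t - 1) ω) ∂P) / (P {ω | G ω = g'}).toReal)
    -- group-time average treatment effects constant over time
    (τ : ℕ → ℝ)
    (hτ : ∀ g : ℕ, 2 ≤ g → g ≤ T → ∀ t ∈ Finset.Icc 1 T,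
      (∫ ω in {ω | G ω = (g : ℕ∞)}, (Y1 t ω - Y0 t ω) ∂P) /
        (P {ω | G ω = (g : ℕ∞)}).toReal = τ g)
    -- the Goodman-Bacon-type weights
    (aH : ℕ → ℝ)
    (haH : ∀ g : ℕ, 2 ≤ g → g ≤ T → aH g = (((g : ℝ) - 1) / (T : ℝ)) *
      ((∑ t ∈ Finset.Icc g T, (1 - F t)) / ((T : ℝ) - (g : ℝ) + 1)
        + (∑ t ∈ Finset.Icc 1 (g - 1), F t) / ((g : ℝ) - 1))) :
    (∀ g : ℕ, 2 ≤ g → g ≤ T → 0 ≤ aH g) ∧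
    (∑ t ∈ Finset.Icc 1 T, ∫ ω, Ddd t ω * Yobs t ω ∂P) =
      (∑ g ∈ Finset.Icc 2 T,
        ((T : ℝ) - (g : ℝ) + 1) * aH g * τ g * (P {ω | G ω = (g : ℕ∞)}).toReal) ∧
    (∑ t ∈ Finset.Icc 1 T, ∫ ω, (Ddd t ω) ^ 2 ∂P) =
      (∑ g ∈ Finset.Icc 2 T,
        ((T : ℝ) - (g : ℝ) + 1) * aH g * (P {ω | G ω = (g : ℕ∞)}).toReal) ∧
    (∑ t ∈ Finset.Icc 1 T, ∫ ω, Ddd t ω * Yobs t ω ∂P) /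
        (∑ t ∈ Finset.Icc 1 T, ∫ ω, (Ddd t ω) ^ 2 ∂P) =
      (∑ g ∈ Finset.Icc 2 T,
        ((T : ℝ) - (g : ℝ) + 1) * aH g * τ g * (P {ω | G ω = (g : ℕ∞)}).toReal) /
      (∑ g ∈ Finset.Icc 2 T,
        ((T : ℝ) - (g : ℝ) + 1) * aH g * (P {ω | G ω = (g : ℕ∞)}).toReal) :=
  twfe_nonnegative_weights_time_constant_effects_general (mΩ := mΩ) P T G hG_meas hG_range hG_top
    hG_pos Y0 Y1 hY0_int hY1_int D hD Yobs hYobs F hF Ddd hDdd hPT τ hτ aH haH
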